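/- Let E be a row-finite directed graph. Then: (a) if v is a vertex of an extreme cycle of E, then ⟨v⟩ = ⟨v(0)⟩ is a simple ℤ-order ideal of T_E and ᵏv < v for some positive integer k; (b) if v and w are vertices of extreme cycles of E, then ⟨v⟩ = ⟨w⟩ if and only if the two cycles are not disjoint (i.e., some path connects a vertex of one cycle to a vertex of the other); (c) every simple ℤ-order ideal of T_E of the form ⟨x⟩ with ᵏx < x for some positive integer k equals ⟨v⟩ for some vertex v lying on an extreme cycle. Consequently, disjoint extreme cycles of E correspond bijectively to simple ℤ-order ideals ⟨x⟩ of T_E with ᵏx < x for some k > 0. -/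

import Mathlib

/-- A directed graph: a set of vertices `V`, a set of edges `Ed`,
and source and range maps. -/
structure DGraph (V : Type) (Ed : Type) where
  s : Ed → V
  r : Ed → V

namespace DGraph

variable {V Ed : Type} (G : DGraph V Ed)

/-- A sink is a vertex emitting no edges. -/
def IsSink (v : V) : Prop := ∀ e : Ed, G.s e ≠ v

/-- A source is a vertex receiving no edges. -/
def IsSource (v : V) : Prop := ∀ e : Ed, G.r e ≠ v

/-- A graph is row-finite if every vertex emits finitely many edges. -/
def RowFinite : Prop := ∀ v : V, {e : Ed | G.s e = v}.Finite

theorem rowFinite_of_finite [Finite Ed] : G.RowFinite := fun _ => Set.toFinite _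

/-- There is an edge from `u` to `w`. -/
def Step (u w : V) : Prop := ∃ e : Ed, G.s e = u ∧ G.r e = w

/-- `u` flows to `w`: `u = w` or there is a path from `u` to `w`. -/
def FlowsTo (u w : V) : Prop := Relation.ReflTransGen G.Step u w

/-- Strongly connected graph. -/
def StronglyConnected : Prop := ∀ u w : V, G.FlowsTo u w

/-- A (finite) path of length `≥ 1`: a nonempty list of consecutive edges. -/
structure GPath (G : DGraph V Ed) where
  edges : List Ed
  ne : edges ≠ []
  chain : edges.Chain' (fun e f => G.r e = G.s f)

namespace GPath

variable {G}

/-- The source of a path. -/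
def src (p : G.GPath) : V := G.s (p.edges.head p.ne)

/-- The range of a path. -/
def tgt (p : G.GPath) : V := G.r (p.edges.getLast p.ne)

/-- The length of a path. -/
def length (p : G.GPath) : ℕ := p.edges.length

/-- The set of vertices of a path (the sources of its edges). -/
def vset (p : G.GPath) : Set V := {v | ∃ e ∈ p.edges, G.s e = v}

/-- A cycle: a closed path with pairwise distinct edges. -/
def IsCycle (p : G.GPath) : Prop := p.src = p.tgt ∧ p.edges.Nodup

/-- The path (cycle) has an exit: an edge `f` with `s f = s eᵢ` but `f ≠ eᵢ`. -/
def HasExit (p : G.GPath) : Prop := ∃ (f e : Ed), e ∈ p.edges ∧ G.s f = G.s e ∧ f ≠ e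

/-- An extreme cycle: a cycle with an exit such that every path leaving it returns to it. -/
def IsExtremeCycle (p : G.GPath) : Prop :=
  p.IsCycle ∧ p.HasExit ∧
    ∀ lam : G.GPath, lam.src ∈ p.vset → ∃ w ∈ p.vset, G.FlowsTo lam.tgt w

end GPath

/-- Lengths of closed paths based at `v`. -/
def closedLens (v : V) : Set ℕ :=
  {n | ∃ p : G.GPath, p.src = v ∧ p.tgt = v ∧ p.length = n}

/-- `d` is the period of `v`: the greatest common divisor of the lengths of closed
paths based at `v`. -/
def IsPeriodOf (d : ℕ) (v : V) : Prop :=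
  (∀ n ∈ G.closedLens v, d ∣ n) ∧ ∀ k : ℕ, (∀ n ∈ G.closedLens v, k ∣ n) → k ∣ d

/-- A line point: no vertex that `v` flows to has a bifurcation or lies on a closed path. -/
def LinePoint (v : V) : Prop :=
  ∀ w : V, G.FlowsTo v w →
    (∀ e f : Ed, G.s e = w → G.s f = w → e = f) ∧
      ¬ ∃ p : G.GPath, p.src = w ∧ p.tgt = w

end DGraph

section MonoidOrder

variable {M : Type} [AddCommMonoid M]

/-- The algebraic preorder on a commutative monoid: `a ≤ b` iff `a + c = b` for some `c`. -/
def MLe (a b : M) : Prop := ∃ c : M, a + c = b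

/-- An order ideal of a commutative monoid. -/
structure IsOrderIdeal (I : Set M) : Prop where
  zero_mem : (0 : M) ∈ I
  add_mem : ∀ {a b : M}, a ∈ I → b ∈ I → a + b ∈ I
  mem_of_le : ∀ {a b : M}, b ∈ I → MLe a b → a ∈ I

/-- The order ideal generated by an element `x`: all `y` with `y ≤ n • x` for some `n`. -/
def orderIdealGen (x : M) : Set M := {y | ∃ n : ℕ, MLe y (n • x)}

/-- A simple order ideal: a nonzero order ideal whose only order sub-ideals are `0` and itself. -/
def IsSimpleOrderIdeal (I : Set M) : Prop :=
  IsOrderIdeal I ∧ I ≠ {0} ∧ ∀ J : Set M, IsOrderIdeal J → J ⊆ I → J = {0} ∨ J = I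

/-- The nonzero elements of `I` form a group under addition. -/
def NonzeroGroup (I : Set M) : Prop :=
  (∀ x ∈ I, ∀ y ∈ I, x ≠ 0 → y ≠ 0 → x + y ≠ 0) ∧
    ∃ e ∈ I, e ≠ (0 : M) ∧ (∀ x ∈ I, x ≠ 0 → e + x = x) ∧
      ∀ x ∈ I, x ≠ 0 → ∃ y ∈ I, y ≠ 0 ∧ x + y = e

/-- The congruence on a commutative monoid associated to an ideal `I`:
`a ≈ b` iff `a + c = b + d` for some `c, d ∈ I`. -/
def idealCon (I : Set M) (h0 : (0 : M) ∈ I)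
    (hadd : ∀ {a b : M}, a ∈ I → b ∈ I → a + b ∈ I) : AddCon M where
  r a b := ∃ c ∈ I, ∃ d ∈ I, a + c = b + d
  iseqv := by
    refine ⟨fun a => ⟨0, h0, 0, h0, rfl⟩, ?_, ?_⟩
    · rintro a b ⟨c, hc, d, hd, h⟩
      exact ⟨d, hd, c, hc, h.symm⟩
    · rintro a b c ⟨x, hx, y, hy, h1⟩ ⟨x', hx', y', hy', h2⟩
      refine ⟨x + x', hadd hx hx', y' + y, hadd hy' hy, ?_⟩
      calc a + (x + x') = (a + x) + x' := (add_assoc _ _ _).symm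
        _ = (b + y) + x' := by rw [h1]
        _ = (b + x') + y := by rw [add_right_comm]
        _ = (c + y') + y := by rw [h2]
        _ = c + (y' + y) := add_assoc _ _ _
  add' := by
    rintro a b a' b' ⟨c, hc, d, hd, h1⟩ ⟨c', hc', d', hd', h2⟩
    refine ⟨c + c', hadd hc hc', d + d', hadd hd hd', ?_⟩
    rw [add_add_add_comm, h1, h2, add_add_add_comm]

end MonoidOrder

namespace DGraph

variable {V Ed : Type} (G : DGraph V Ed)

/-- The defining relations of the talented monoid, as a relation on the free
commutative monoid on `E⁰ × ℤ`. -/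
def talRel (hrf : G.RowFinite) (a b : (V × ℤ) →₀ ℕ) : Prop :=
  ∃ (v : V) (i : ℤ), ¬ G.IsSink v ∧ a = Finsupp.single (v, i) 1 ∧
    b = ∑ e ∈ (hrf v).toFinset, Finsupp.single (G.r e, i + 1) 1

/-- The congruence generated by the defining relations of the talented monoid. -/
noncomputable def talCon (hrf : G.RowFinite) : AddCon ((V × ℤ) →₀ ℕ) := addConGen (G.talRel hrf)

/-- The talented monoid `T_E` of a row-finite graph. -/
noncomputable def Tal (hrf : G.RowFinite) : Type := (G.talCon hrf).Quotient

noncomputable instance (hrf : G.RowFinite) : AddCommMonoid (G.Tal hrf) :=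
  inferInstanceAs (AddCommMonoid (G.talCon hrf).Quotient)

/-- The generator `v(i)` of the talented monoid. -/
noncomputable def gen (hrf : G.RowFinite) (v : V) (i : ℤ) : G.Tal hrf :=
  (G.talCon hrf).mk' (Finsupp.single (v, i) 1)

/-- The action of `n : ℤ` on the talented monoid, determined by `ⁿv(i) = v(i+n)`. -/
noncomputable def shift (hrf : G.RowFinite) (n : ℤ) : G.Tal hrf →+ G.Tal hrf :=
  AddCon.lift _
    ((AddCon.mk' _).comp
      (Finsupp.mapDomain.addMonoidHom (fun p : V × ℤ => (p.1, p.2 + n))))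
    (by
      refine AddCon.addConGen_le.mpr ?_
      rintro a b ⟨v, i, hv, rfl, rfl⟩
      show (G.talCon hrf).mk'
            (Finsupp.mapDomain (fun p : V × ℤ => (p.1, p.2 + n)) (Finsupp.single (v, i) 1)) =
          (G.talCon hrf).mk'
            (Finsupp.mapDomain (fun p : V × ℤ => (p.1, p.2 + n))
              (∑ e ∈ (hrf v).toFinset, Finsupp.single (G.r e, i + 1) 1))
      rw [Finsupp.mapDomain_single, Finsupp.mapDomain_finset_sum]
      simp only [Finsupp.mapDomain_single]
      refine (AddCon.eq (G.talCon hrf)).mpr ?_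
      refine AddConGen.Rel.of _ _ ⟨v, i + n, hv, rfl, ?_⟩
      exact Finset.sum_congr rfl fun e _ => by rw [add_right_comm])

end DGraph


namespace DGraph

variable {V Ed : Type} (G : DGraph V Ed)

/-- A ℤ-order ideal of the talented monoid: an order ideal closed under the ℤ-action. -/
def IsZOrderIdeal (hrf : G.RowFinite) (I : Set (G.Tal hrf)) : Prop :=
  IsOrderIdeal I ∧ ∀ (n : ℤ) (x : G.Tal hrf), x ∈ I → G.shift hrf n x ∈ I

/-- The ℤ-order ideal generated by a set `S`. -/
def zIdealGen (hrf : G.RowFinite) (S : Set (G.Tal hrf)) : Set (G.Tal hrf) :=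
  ⋂₀ {I : Set (G.Tal hrf) | G.IsZOrderIdeal hrf I ∧ S ⊆ I}

/-- A simple ℤ-order ideal: a nonzero ℤ-order ideal whose only ℤ-order sub-ideals
are `0` and itself. -/
def IsSimpleZIdeal (hrf : G.RowFinite) (I : Set (G.Tal hrf)) : Prop :=
  G.IsZOrderIdeal hrf I ∧ I ≠ {0} ∧
    ∀ J : Set (G.Tal hrf), G.IsZOrderIdeal hrf J → J ⊆ I → J = {0} ∨ J = I

/-- The adjacency matrix of a graph: the `(u, w)` entry is the number of edges
from `u` to `w`. -/
noncomputable def adj : Matrix V V ℕ := Matrix.of fun u w => Nat.card {e : Ed // G.s e = u ∧ G.r e = w}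

/-- The defining relations of the graph monoid `M_E`, as a relation on the free
commutative monoid on `E⁰`. -/
def gmRel (hrf : G.RowFinite) (a b : V →₀ ℕ) : Prop :=
  ∃ v : V, ¬ G.IsSink v ∧ a = Finsupp.single v 1 ∧
    b = ∑ e ∈ (hrf v).toFinset, Finsupp.single (G.r e) 1

/-- The graph monoid `M_E` of a row-finite graph. -/
noncomputable def GM (hrf : G.RowFinite) : Type := (addConGen (G.gmRel hrf)).Quotient

noncomputable instance (hrf : G.RowFinite) : AddCommMonoid (G.GM hrf) :=
  inferInstanceAs (AddCommMonoid (addConGen (G.gmRel hrf)).Quotient)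

/-- The smallest reflexive, transitive and additive relation on the free commutative
monoid on `E⁰` containing the defining relations of the graph monoid. -/
inductive FlowRel (hrf : G.RowFinite) : (V →₀ ℕ) → (V →₀ ℕ) → Prop
  | of {a b : V →₀ ℕ} : G.gmRel hrf a b → FlowRel hrf a b
  | refl (a : V →₀ ℕ) : FlowRel hrf a a
  | trans {a b c : V →₀ ℕ} : FlowRel hrf a b → FlowRel hrf b c → FlowRel hrf a c
  | add_right {a b : V →₀ ℕ} (c : V →₀ ℕ) : FlowRel hrf a b → FlowRel hrf (a + c) (b + c)

/-- The quotient of the talented monoid by a ℤ-order ideal. -/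
noncomputable def TalQuot (hrf : G.RowFinite) (I : Set (G.Tal hrf))
    (hI : G.IsZOrderIdeal hrf I) : Type :=
  (idealCon I hI.1.zero_mem (fun ha hb => hI.1.add_mem ha hb)).Quotient

noncomputable instance (hrf : G.RowFinite) (I : Set (G.Tal hrf))
    (hI : G.IsZOrderIdeal hrf I) : AddCommMonoid (G.TalQuot hrf I hI) :=
  inferInstanceAs
    (AddCommMonoid (idealCon I hI.1.zero_mem (fun ha hb => hI.1.add_mem ha hb)).Quotient)

/-- The ℤ-action descends to the quotient of the talented monoid by a ℤ-order ideal. -/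
noncomputable def qshift (hrf : G.RowFinite) (I : Set (G.Tal hrf))
    (hI : G.IsZOrderIdeal hrf I) (n : ℤ) : G.TalQuot hrf I hI →+ G.TalQuot hrf I hI :=
  AddCon.lift _
    ((AddCon.mk' (idealCon I hI.1.zero_mem (fun ha hb => hI.1.add_mem ha hb))).comp
      (G.shift hrf n))
    (by
      rintro a b ⟨c, hc, d, hd, h⟩
      show AddCon.ker _ _ _
      show (AddCon.mk' _) (G.shift hrf n a) = (AddCon.mk' _) (G.shift hrf n b)
      refine (AddCon.eq _).mpr ?_
      exact ⟨G.shift hrf n c, hI.2 n c hc, G.shift hrf n d, hI.2 n d hd, by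
        rw [← map_add, ← map_add, h]⟩)

end DGraph

/-! ### Auxiliary development -/

open Finsupp in
theorem Finsupp.nat_eq_zero_iff {α : Type*} (a : α →₀ ℕ) : a = 0 ↔ ∀ p, a p = 0 := by
  constructor
  · intro h p; rw [h]; rfl
  · intro h; ext p; exact h p

namespace DGraph

variable {V Ed : Type} (G : DGraph V Ed) (hrf : G.RowFinite)

theorem not_isSink_iff (v : V) : ¬ G.IsSink v ↔ ∃ e, G.s e = v := by
  unfold IsSink; push_neg; rfl

theorem mem_toFinset_iff (v : V) (e : Ed) : e ∈ (hrf v).toFinset ↔ G.s e = v :=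
  Set.Finite.mem_toFinset _

/-- The canonical map onto the talented monoid, as an additive monoid hom. -/
noncomputable def mkT : ((V × ℤ) →₀ ℕ) →+ G.Tal hrf := (G.talCon hrf).mk'

theorem mkT_surjective : Function.Surjective (G.mkT hrf) := fun x => by
  obtain ⟨a, ha⟩ := AddCon.mk'_surjective (c := G.talCon hrf) x
  exact ⟨a, ha⟩

/-- The expansion of a generator. -/
noncomputable def Expand (p : V × ℤ) : (V × ℤ) →₀ ℕ :=
  ∑ e ∈ (hrf p.1).toFinset, Finsupp.single (G.r e, p.2 + 1) 1

theorem mkT_eq_iff (a b : (V × ℤ) →₀ ℕ) :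
    G.mkT hrf a = G.mkT hrf b ↔ (G.talCon hrf) a b := AddCon.eq _

theorem mkT_expand {v : V} (hv : ¬ G.IsSink v) (i : ℤ) :
    G.mkT hrf (Finsupp.single (v, i) 1) = G.mkT hrf (G.Expand hrf (v, i)) := by
  rw [mkT_eq_iff]
  exact AddConGen.Rel.of _ _ ⟨v, i, hv, rfl, rfl⟩

theorem gen_def (v : V) (i : ℤ) : G.gen hrf v i = G.mkT hrf (Finsupp.single (v, i) 1) := rfl

theorem gen_expand {v : V} (hv : ¬ G.IsSink v) (i : ℤ) :
    G.gen hrf v i = ∑ e ∈ (hrf v).toFinset, G.gen hrf (G.r e) (i + 1) := by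
  rw [gen_def, mkT_expand G hrf hv i, Expand, map_sum]
  rfl

theorem shift_mkT (n : ℤ) (a : (V × ℤ) →₀ ℕ) :
    G.shift hrf n (G.mkT hrf a) =
      G.mkT hrf (Finsupp.mapDomain (fun p : V × ℤ => (p.1, p.2 + n)) a) := rfl

theorem shift_gen (n : ℤ) (v : V) (i : ℤ) :
    G.shift hrf n (G.gen hrf v i) = G.gen hrf v (i + n) := by
  rw [gen_def, shift_mkT, Finsupp.mapDomain_single, gen_def]

/-- Membership support predicate: all vertices appearing in `a` lie in `S`. -/
def PSupp (S : Set V) (a : (V × ℤ) →₀ ℕ) : Prop := ∀ p : V × ℤ, a p ≠ 0 → p.1 ∈ S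

/-- A saturated hereditary set of vertices. -/
def SatHer (S : Set V) : Prop :=
  (∀ e, G.s e ∈ S → G.r e ∈ S) ∧
    ∀ v, ¬ G.IsSink v → (∀ e, G.s e = v → G.r e ∈ S) → v ∈ S

variable {G}

theorem pSupp_add {S : Set V} {a b : (V × ℤ) →₀ ℕ} :
    PSupp S (a + b) ↔ PSupp S a ∧ PSupp S b := by
  constructor
  · intro h
    constructor <;> intro p hp <;> apply h p <;> rw [Finsupp.add_apply] <;> omega
  · rintro ⟨h1, h2⟩ p hp
    rw [Finsupp.add_apply] at hp
    by_cases h1' : a p = 0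
    · exact h2 p (by omega)
    · exact h1 p h1'

theorem pSupp_zero {S : Set V} : PSupp S (0 : (V × ℤ) →₀ ℕ) := fun p hp => absurd rfl hp

theorem pSupp_single {S : Set V} {p : V × ℤ} :
    PSupp S (Finsupp.single p 1) ↔ p.1 ∈ S := by
  constructor
  · intro h; exact h p (by simp)
  · intro h q hq
    rcases eq_or_ne p q with rfl | hne
    · exact h
    · exact absurd (Finsupp.single_eq_of_ne' hne) hq

theorem pSupp_sum {S : Set V} {ι : Type*} {s : Finset ι} {f : ι → (V × ℤ) →₀ ℕ} :
    PSupp S (∑ i ∈ s, f i) ↔ ∀ i ∈ s, PSupp S (f i) := by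
  classical
  induction s using Finset.induction_on with
  | empty => simp [pSupp_zero]
  | insert _ _ hni ih =>
    rw [Finset.sum_insert hni, pSupp_add, ih]
    simp_all

theorem pSupp_expand {S : Set V} {p : V × ℤ} :
    PSupp S (G.Expand hrf p) ↔ ∀ e ∈ (hrf p.1).toFinset, G.r e ∈ S := by
  rw [Expand, pSupp_sum]
  constructor
  · intro h e he; exact pSupp_single.mp (h e he)
  · intro h e he; exact pSupp_single.mpr (h e he)

/-- Support invariance under the talented monoid congruence, for saturated
hereditary `S`. -/
theorem pSupp_iff_of_talCon {S : Set V} (hS : G.SatHer S) {a b : (V × ℤ) →₀ ℕ}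
    (h : (G.talCon hrf) a b) : PSupp S a ↔ PSupp S b := by
  let C : AddCon ((V × ℤ) →₀ ℕ) :=
    { r := fun a b => (PSupp S a ↔ PSupp S b)
      iseqv := ⟨fun _ => Iff.rfl, Iff.symm, Iff.trans⟩
      add' := fun h1 h2 => by
        show PSupp S _ ↔ PSupp S _
        rw [pSupp_add, pSupp_add]
        exact and_congr h1 h2 }
  have hle : G.talCon hrf ≤ C := by
    refine AddCon.addConGen_le.mpr ?_
    rintro a b ⟨v, i, hv, rfl, rfl⟩
    show PSupp S _ ↔ PSupp S _
    rw [pSupp_single]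
    rw [show (∑ e ∈ (hrf v).toFinset, Finsupp.single ((G.r e, i + 1) : V × ℤ) 1)
        = G.Expand hrf (v, i) from rfl]
    rw [pSupp_expand]
    constructor
    · intro hvS e he
      exact hS.1 e (((mem_toFinset_iff G hrf v e).mp he).symm ▸ hvS)
    · intro he
      exact hS.2 v hv fun e hev => he e ((mem_toFinset_iff G hrf v e).mpr hev)
  exact hle h

theorem satHer_univ : G.SatHer Set.univ :=
  ⟨fun _ _ => trivial, fun _ _ _ => trivial⟩

/-- The talented monoid is conical: representatives of zero are zero. -/
theorem eq_zero_of_mkT_eq_zero {a : (V × ℤ) →₀ ℕ} (h : G.mkT hrf a = 0) : a = 0 := by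
  have h0 : G.mkT hrf a = G.mkT hrf 0 := by rw [h, map_zero]
  rw [mkT_eq_iff] at h0
  have := pSupp_iff_of_talCon hrf (S := ∅)
    ⟨fun e he => absurd he (Set.notMem_empty _),
     fun v hv hall => by
      obtain ⟨e, he⟩ := (not_isSink_iff G v).mp hv
      exact absurd (hall e he) (Set.notMem_empty _)⟩ h0
  have hP : PSupp ∅ a := by
    rw [this]; exact pSupp_zero
  rw [Finsupp.nat_eq_zero_iff]
  intro p
  by_contra hp
  exact absurd (hP p hp) (Set.notMem_empty _)

theorem gen_ne_zero (v : V) (i : ℤ) : G.gen hrf v i ≠ 0 := by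
  intro h
  have := eq_zero_of_mkT_eq_zero hrf (a := Finsupp.single (v, i) 1) h
  simpa using Finsupp.single_eq_zero.mp this

/-- Conicality at the level of the talented monoid. -/
theorem tal_conical {x y : G.Tal hrf} (h : x + y = 0) : x = 0 := by
  obtain ⟨a, rfl⟩ := mkT_surjective G hrf x
  obtain ⟨b, rfl⟩ := mkT_surjective G hrf y
  rw [← map_add] at h
  have := eq_zero_of_mkT_eq_zero hrf h
  have ha : a = 0 := by
    rw [Finsupp.nat_eq_zero_iff] at this ⊢
    intro p; have := this p; rw [Finsupp.add_apply] at this; omega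
  rw [ha, map_zero]

end DGraph

/-! ### MLe basics -/

section MLeLemmas

variable {M N : Type} [AddCommMonoid M] [AddCommMonoid N]

theorem mle_refl (a : M) : MLe a a := ⟨0, add_zero a⟩

theorem mle_trans {a b c : M} (h1 : MLe a b) (h2 : MLe b c) : MLe a c := by
  obtain ⟨u, hu⟩ := h1; obtain ⟨v, hv⟩ := h2
  exact ⟨u + v, by rw [← add_assoc, hu, hv]⟩

theorem mle_map (f : M →+ N) {a b : M} (h : MLe a b) : MLe (f a) (f b) := by
  obtain ⟨u, hu⟩ := h; exact ⟨f u, by rw [← map_add, hu]⟩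

theorem mle_add_right {a b : M} (c : M) (h : MLe a b) : MLe a (b + c) := by
  obtain ⟨u, hu⟩ := h; exact ⟨u + c, by rw [← add_assoc, hu]⟩

end MLeLemmas

namespace DGraph

variable {V Ed : Type} {G : DGraph V Ed}

/-! ### Paths as edge lists -/

inductive PathTo (G : DGraph V Ed) : V → V → List Ed → Prop
  | nil (v : V) : PathTo G v v []
  | cons {e : Ed} {w : V} {t : List Ed} (v : V) (hs : G.s e = v)
      (h : PathTo G (G.r e) w t) : PathTo G v w (e :: t)

theorem PathTo.append {u v w : V} {l1 l2 : List Ed}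
    (h1 : PathTo G u v l1) (h2 : PathTo G v w l2) : PathTo G u w (l1 ++ l2) := by
  induction h1 with
  | nil => exact h2
  | cons v hs h ih => exact PathTo.cons _ hs (ih h2)

theorem PathTo.split {u w : V} {l1 l2 : List Ed}
    (h : PathTo G u w (l1 ++ l2)) : ∃ v, PathTo G u v l1 ∧ PathTo G v w l2 := by
  induction l1 generalizing u with
  | nil => exact ⟨u, PathTo.nil u, h⟩
  | cons e t ih =>
    cases h with
    | cons _ hs h' =>
      obtain ⟨v, hv1, hv2⟩ := ih h'
      exact ⟨v, PathTo.cons _ hs hv1, hv2⟩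

theorem PathTo.head_src {u w : V} {e : Ed} {t : List Ed}
    (h : PathTo G u w (e :: t)) : G.s e = u ∧ PathTo G (G.r e) w t := by
  cases h with
  | cons _ hs h' => exact ⟨hs, h'⟩

theorem PathTo.chain' {u w : V} {l : List Ed} (h : PathTo G u w l) :
    l.Chain' (fun e f => G.r e = G.s f) := by
  induction h with
  | nil => exact List.isChain_nil
  | cons v hs h ih =>
    rename_i e w' t
    cases t with
    | nil => simp [List.Chain']
    | cons f t' =>
      rw [List.Chain', List.isChain_cons_cons]
      exact ⟨(h.head_src).1.symm, ih⟩

theorem PathTo.last_tgt {u w : V} {l : List Ed} (h : PathTo G u w l) (hne : l ≠ []) :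
    G.r (l.getLast hne) = w := by
  induction h with
  | nil => exact absurd rfl hne
  | cons v hs h ih =>
    rename_i e w' t
    cases t with
    | nil => cases h; simp
    | cons f t' => rw [List.getLast_cons (by simp)]; exact ih (by simp)

theorem flowsTo_iff_pathTo {u w : V} : G.FlowsTo u w ↔ ∃ l, PathTo G u w l := by
  constructor
  · intro h
    induction h with
    | refl => exact ⟨[], PathTo.nil u⟩
    | tail h1 h2 ih =>
      obtain ⟨l, hl⟩ := ih
      obtain ⟨e, he1, he2⟩ := h2
      exact ⟨l ++ [e], hl.append (he1 ▸ PathTo.cons _ rfl (he2 ▸ PathTo.nil _))⟩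
  · rintro ⟨l, hl⟩
    induction hl with
    | nil => exact Relation.ReflTransGen.refl
    | cons v hs h ih => exact Relation.ReflTransGen.head ⟨_, hs, rfl⟩ ih

theorem pathTo_flowsTo {u w : V} {l : List Ed} (h : PathTo G u w l) : G.FlowsTo u w :=
  flowsTo_iff_pathTo.mpr ⟨l, h⟩

/-- Build a `GPath` from a nonempty `PathTo`. -/
noncomputable def PathTo.toGPath {u w : V} {l : List Ed} (h : PathTo G u w l)
    (hne : l ≠ []) : G.GPath := ⟨l, hne, h.chain'⟩

theorem PathTo.toGPath_src {u w : V} {l : List Ed} (h : PathTo G u w l) (hne : l ≠ []) :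
    (h.toGPath hne).src = u := by
  unfold GPath.src toGPath
  cases l with
  | nil => exact absurd rfl hne
  | cons e t => simp only [List.head_cons]; exact (h.head_src).1

theorem PathTo.toGPath_tgt {u w : V} {l : List Ed} (h : PathTo G u w l) (hne : l ≠ []) :
    (h.toGPath hne).tgt = w := h.last_tgt hne

theorem gpath_pathTo (p : G.GPath) : PathTo G p.src p.tgt p.edges := by
  obtain ⟨l, hne, hch⟩ := p
  unfold GPath.src GPath.tgt
  induction l with
  | nil => exact absurd rfl hne
  | cons e t ih =>
    cases t with
    | nil =>
      simp only [List.head_cons, List.getLast_singleton]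
      exact PathTo.cons _ rfl (PathTo.nil _)
    | cons f t' =>
      rw [List.Chain', List.isChain_cons_cons] at hch
      have := ih (by simp) hch.2
      simp only [List.head_cons] at this ⊢
      rw [List.getLast_cons (by simp)]
      exact PathTo.cons _ rfl (hch.1 ▸ this)

/-- Any edge of a path: its source is reachable from the path source, and its
range reaches the path target. -/
theorem PathTo.mem_flows {u w : V} {l : List Ed} (h : PathTo G u w l) {e : Ed}
    (he : e ∈ l) : G.FlowsTo u (G.s e) ∧ G.FlowsTo (G.r e) w := by
  obtain ⟨l1, l2, rfl⟩ := List.append_of_mem he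
  obtain ⟨v, hv1, hv2⟩ := h.split
  obtain ⟨hse, hrest⟩ := hv2.head_src
  exact ⟨hse ▸ pathTo_flowsTo hv1, pathTo_flowsTo hrest⟩

/-- For a cycle, all its vertices flow to each other. -/
theorem cycle_flows {p : G.GPath} (hc : p.IsCycle) {u w : V}
    (hu : u ∈ p.vset) (hw : w ∈ p.vset) : G.FlowsTo u w := by
  obtain ⟨e, he, rfl⟩ := hu
  obtain ⟨f, hf, rfl⟩ := hw
  have h := gpath_pathTo p
  have h1 := (h.mem_flows he).2
  have h2 := (h.mem_flows hf).1
  have hstep : G.FlowsTo (G.s e) (G.r e) := Relation.ReflTransGen.single ⟨e, rfl, rfl⟩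
  have h3 : G.FlowsTo (G.s e) p.src := by rw [hc.1]; exact hstep.trans h1
  exact h3.trans h2

end DGraph

namespace DGraph

variable {V Ed : Type} {G : DGraph V Ed}

/-! ### Saturated hereditary closure -/

inductive SCS (G : DGraph V Ed) (A : Set V) : V → Prop
  | base {v : V} : v ∈ A → SCS G A v
  | her {e : Ed} : SCS G A (G.s e) → SCS G A (G.r e)
  | sat {w : V} : ¬ G.IsSink w → (∀ e, G.s e = w → SCS G A (G.r e)) → SCS G A w

theorem satHer_scs (A : Set V) : G.SatHer {w | SCS G A w} :=
  ⟨fun e he => SCS.her he, fun _ hv hall => SCS.sat hv hall⟩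

theorem SCS.flowsTo {A : Set V} {u w : V} (hu : SCS G A u) (h : G.FlowsTo u w) :
    SCS G A w := by
  induction h with
  | refl => exact hu
  | tail h1 h2 ih => obtain ⟨e, he1, he2⟩ := h2; exact he2 ▸ SCS.her (he1 ▸ ih)

/-- The main induction principle: if `Q` holds downstream of every root and is
backward-saturated, it holds downstream of the saturated hereditary closure. -/
theorem scs_reach {A : Set V} {Q : V → Prop}
    (hbase : ∀ v ∈ A, ∀ w, G.FlowsTo v w → Q w)
    (hsat : ∀ w, ¬ G.IsSink w → (∀ e, G.s e = w → Q (G.r e)) → Q w) :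
    ∀ u, SCS G A u → ∀ w, G.FlowsTo u w → Q w := by
  intro u hu
  induction hu with
  | base hv => exact hbase _ hv
  | her h ih =>
    rename_i e
    intro w hw
    exact ih w (Relation.ReflTransGen.head ⟨e, rfl, rfl⟩ hw)
  | sat hns hall ih =>
    rename_i w'
    intro w hw
    rcases Relation.reflTransGen_iff_eq_or_transGen.mp hw with rfl | htg
    · exact hsat _ hns fun e he => ih e he _ Relation.ReflTransGen.refl
    · obtain ⟨y, hy1, hy2⟩ := Relation.TransGen.head'_iff.mp htg
      obtain ⟨e, he1, he2⟩ := hy1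
      exact ih e he1 w (he2 ▸ hy2)

end DGraph

theorem isOrderIdeal_sum {M : Type} [AddCommMonoid M] {I : Set M} (hI : IsOrderIdeal I)
    {ι : Type} {s : Finset ι} {f : ι → M} (h : ∀ i ∈ s, f i ∈ I) :
    (∑ i ∈ s, f i) ∈ I := by
  classical
  induction s using Finset.induction_on with
  | empty => simpa using hI.zero_mem
  | insert _ _ hni ih =>
    rename_i a s'
    rw [Finset.sum_insert hni]
    exact hI.add_mem (h a (by simp)) (ih fun i hi => h i (by simp [hi]))

namespace DGraph

variable {V Ed : Type} {G : DGraph V Ed} {hrf : G.RowFinite}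

/-! ### ℤ-order ideals -/

theorem mem_zIdealGen {S : Set (G.Tal hrf)} {x : G.Tal hrf} :
    x ∈ G.zIdealGen hrf S ↔
      ∀ I : Set (G.Tal hrf), G.IsZOrderIdeal hrf I → S ⊆ I → x ∈ I := by
  constructor
  · intro h I hI hS; exact h I ⟨hI, hS⟩
  · rintro h I ⟨hI, hS⟩; exact h I hI hS

theorem zIdealGen_subset {S J : Set (G.Tal hrf)} (hJ : G.IsZOrderIdeal hrf J)
    (hS : S ⊆ J) : G.zIdealGen hrf S ⊆ J :=
  fun _ hx => mem_zIdealGen.mp hx J hJ hS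

theorem subset_zIdealGen {S : Set (G.Tal hrf)} : S ⊆ G.zIdealGen hrf S :=
  fun _ hx => mem_zIdealGen.mpr fun _ _ hS => hS hx

theorem isZOrderIdeal_zIdealGen (S : Set (G.Tal hrf)) :
    G.IsZOrderIdeal hrf (G.zIdealGen hrf S) := by
  refine ⟨⟨?_, ?_, ?_⟩, ?_⟩
  · exact mem_zIdealGen.mpr fun I hI _ => hI.1.zero_mem
  · intro a b ha hb
    exact mem_zIdealGen.mpr fun I hI hS =>
      hI.1.add_mem (mem_zIdealGen.mp ha I hI hS) (mem_zIdealGen.mp hb I hI hS)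
  · intro a b hb hle
    exact mem_zIdealGen.mpr fun I hI hS =>
      hI.1.mem_of_le (mem_zIdealGen.mp hb I hI hS) hle
  · intro n x hx
    exact mem_zIdealGen.mpr fun I hI hS => hI.2 n x (mem_zIdealGen.mp hx I hI hS)

/-- Single-step inequality: a child generator is below its parent. -/
theorem gen_child_mle {e : Ed} (i : ℤ) :
    MLe (G.gen hrf (G.r e) (i + 1)) (G.gen hrf (G.s e) i) := by
  classical
  have hns : ¬ G.IsSink (G.s e) := (not_isSink_iff G _).mpr ⟨e, rfl⟩
  have hexp := gen_expand G hrf hns i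
  have he : e ∈ (hrf (G.s e)).toFinset := (mem_toFinset_iff G hrf _ e).mpr rfl
  exact ⟨∑ f ∈ ((hrf (G.s e)).toFinset).erase e, G.gen hrf (G.r f) (i + 1),
    by rw [hexp, ← Finset.sum_erase_add _ _ he]; exact add_comm _ _⟩

theorem pathTo_mle {u w : V} {l : List Ed} (h : PathTo G u w l) (i : ℤ) :
    MLe (G.gen hrf w (i + l.length)) (G.gen hrf u i) := by
  induction h generalizing i with
  | nil => simpa using mle_refl _
  | cons v hs hp ih =>
    rename_i e w' t
    have h2 := ih (i + 1)
    have hcast : i + ((e :: t).length : ℤ) = (i + 1) + (t.length : ℤ) := by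
      rw [List.length_cons]; push_cast; ring
    rw [hcast]
    exact mle_trans h2 (hs ▸ gen_child_mle (i := i))

theorem mkT_single_mle {a : (V × ℤ) →₀ ℕ} {p : V × ℤ} (hp : a p ≠ 0) :
    MLe (G.mkT hrf (Finsupp.single p 1)) (G.mkT hrf a) := by
  refine ⟨G.mkT hrf (a.erase p + Finsupp.single p (a p - 1)), ?_⟩
  rw [← map_add]
  congr 1
  ext q
  rcases eq_or_ne q p with rfl | hne
  · simp only [Finsupp.add_apply, Finsupp.single_eq_same, Finsupp.erase_same]
    omega
  · simp only [Finsupp.add_apply, Finsupp.single_eq_of_ne' (Ne.symm hne),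
      Finsupp.erase_ne hne, zero_add, add_zero]

/-- Generators along the saturated hereditary closure belong to any ℤ-order
ideal containing the root generators. -/
theorem gen_mem_of_scs {A : Set V} {J : Set (G.Tal hrf)} (hJ : G.IsZOrderIdeal hrf J)
    (hA : ∀ q ∈ A, ∀ i : ℤ, G.gen hrf q i ∈ J) {w : V} (hw : SCS G A w) :
    ∀ i : ℤ, G.gen hrf w i ∈ J := by
  induction hw with
  | base hv => exact hA _ hv
  | her h ih =>
    rename_i e
    intro i
    have h1 := ih (i - 1)
    have h2 := gen_child_mle (G := G) (hrf := hrf) (e := e) (i - 1)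
    rw [sub_add_cancel] at h2
    exact hJ.1.mem_of_le h1 h2
  | sat hns hall ih =>
    intro i
    rw [gen_expand G hrf hns i]
    exact isOrderIdeal_sum hJ.1 fun e he => ih e ((mem_toFinset_iff G hrf _ e).mp he) (i + 1)

/-! ### The ideal of elements supported in `S` -/

def ISet (G : DGraph V Ed) (hrf : G.RowFinite) (S : Set V) : Set (G.Tal hrf) :=
  {x | ∃ a, G.mkT hrf a = x ∧ PSupp S a}

theorem pSupp_mapDomain {S : Set V} {a : (V × ℤ) →₀ ℕ} (h : PSupp S a) (n : ℤ) :
    PSupp S (Finsupp.mapDomain (fun p : V × ℤ => (p.1, p.2 + n)) a) := by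
  classical
  intro p hp
  have hmem : p ∈ (Finsupp.mapDomain (fun p : V × ℤ => (p.1, p.2 + n)) a).support :=
    Finsupp.mem_support_iff.mpr hp
  have := Finsupp.mapDomain_support hmem
  obtain ⟨q, hq, rfl⟩ := Finset.mem_image.mp this
  exact h q (Finsupp.mem_support_iff.mp hq)

theorem isZOrderIdeal_iSet {S : Set V} (hS : G.SatHer S) :
    G.IsZOrderIdeal hrf (ISet G hrf S) := by
  refine ⟨⟨⟨0, map_zero _, pSupp_zero⟩, ?_, ?_⟩, ?_⟩
  · rintro a b ⟨u, hu, hPu⟩ ⟨v, hv, hPv⟩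
    exact ⟨u + v, by rw [map_add, hu, hv], pSupp_add.mpr ⟨hPu, hPv⟩⟩
  · rintro x y ⟨d, hd, hPd⟩ ⟨c, hc⟩
    obtain ⟨a, rfl⟩ := mkT_surjective G hrf x
    obtain ⟨b, rfl⟩ := mkT_surjective G hrf c
    rw [← map_add] at hc
    have htc : (G.talCon hrf) (a + b) d := (mkT_eq_iff G hrf _ _).mp (hc.trans hd.symm)
    have := (pSupp_iff_of_talCon hrf hS htc).mpr hPd
    exact ⟨a, rfl, (pSupp_add.mp this).1⟩
  · rintro n x ⟨a, rfl, hPa⟩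
    exact ⟨_, (shift_mkT G hrf n a).symm, pSupp_mapDomain hPa n⟩

theorem mem_of_gen_mem_iSet {S : Set V} (hS : G.SatHer S) {w : V} {j : ℤ}
    (h : G.gen hrf w j ∈ ISet G hrf S) : w ∈ S := by
  obtain ⟨a, ha, hPa⟩ := h
  have htc : (G.talCon hrf) a (Finsupp.single (w, j) 1) :=
    (mkT_eq_iff G hrf _ _).mp (ha.trans (gen_def G hrf w j))
  exact pSupp_single.mp ((pSupp_iff_of_talCon hrf hS htc).mp hPa)

theorem gen_mem_iSet {S : Set V} {w : V} {j : ℤ} (hw : w ∈ S) :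
    G.gen hrf w j ∈ ISet G hrf S :=
  ⟨Finsupp.single (w, j) 1, rfl, pSupp_single.mpr hw⟩

/-- Characterization: `gen w j ∈ ⟨gen v 0⟩` iff `w` is in the saturated
hereditary closure of `v`. -/
theorem gen_mem_zIdealGen_iff {v w : V} {j : ℤ} :
    G.gen hrf w j ∈ G.zIdealGen hrf {G.gen hrf v 0} ↔ SCS G {v} w := by
  constructor
  · intro h
    have hsub : G.zIdealGen hrf {G.gen hrf v 0} ⊆ ISet G hrf {u | SCS G {v} u} := by
      apply zIdealGen_subset (isZOrderIdeal_iSet (satHer_scs _))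
      intro x hx
      rw [Set.mem_singleton_iff] at hx
      rw [hx]
      exact gen_mem_iSet (SCS.base rfl)
    exact mem_of_gen_mem_iSet (satHer_scs _) (hsub h)
  · intro h
    refine gen_mem_of_scs (isZOrderIdeal_zIdealGen _) ?_ h j
    rintro q hq i
    rw [Set.mem_singleton_iff] at hq
    subst hq
    have := (isZOrderIdeal_zIdealGen (G := G) (hrf := hrf) {G.gen hrf q 0}).2 i _
      (subset_zIdealGen rfl)
    rwa [shift_gen, zero_add] at this

end DGraph

namespace DGraph

variable {V Ed : Type} {G : DGraph V Ed} {hrf : G.RowFinite}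

/-! ### Finite witnesses for the talented monoid congruence -/

/-- `a` and `b` are connected by relations whose expanded generators form a finite
set `R` of non-sinks inside `S`. -/
def FWProp (G : DGraph V Ed) (hrf : G.RowFinite) (S : Set V) (a b : (V × ℤ) →₀ ℕ) : Prop :=
  ∃ R : Finset (V × ℤ), (∀ p ∈ R, p.1 ∈ S ∧ ¬ G.IsSink p.1) ∧
    ∀ θ : ((V × ℤ) →₀ ℕ) →+ ((V × ℤ) →₀ ℕ),
      (∀ p ∈ R, θ (Finsupp.single p 1) = θ (G.Expand hrf p)) → θ a = θ b

theorem fw_of_talCon {S : Set V} (hS : G.SatHer S) {a b : (V × ℤ) →₀ ℕ}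
    (h : (G.talCon hrf) a b) (ha : PSupp S a) (hb : PSupp S b) :
    FWProp G hrf S a b := by
  classical
  let C : AddCon ((V × ℤ) →₀ ℕ) :=
    { r := fun a b => (G.talCon hrf) a b ∧ (PSupp S a → PSupp S b → FWProp G hrf S a b)
      iseqv := by
        refine ⟨fun a => ⟨(G.talCon hrf).refl a, fun _ _ => ⟨∅, by simp, fun θ _ => rfl⟩⟩,
          ?_, ?_⟩
        · rintro a b ⟨h1, h2⟩
          refine ⟨(G.talCon hrf).symm h1, fun hPb hPa => ?_⟩
          obtain ⟨R, hR, hθ⟩ := h2 hPa hPb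
          exact ⟨R, hR, fun θ hc => (hθ θ hc).symm⟩
        · rintro a b c ⟨h1, h2⟩ ⟨h3, h4⟩
          refine ⟨(G.talCon hrf).trans h1 h3, fun hPa hPc => ?_⟩
          have hPb := (pSupp_iff_of_talCon hrf hS h1).mp hPa
          obtain ⟨R1, hR1, hθ1⟩ := h2 hPa hPb
          obtain ⟨R2, hR2, hθ2⟩ := h4 hPb hPc
          refine ⟨R1 ∪ R2, ?_, fun θ hc => ?_⟩
          · intro p hp
            rcases Finset.mem_union.mp hp with hp | hp
            · exact hR1 p hp
            · exact hR2 p hp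
          · have hc1 : ∀ p ∈ R1, θ (Finsupp.single p 1) = θ (G.Expand hrf p) :=
              fun p hp => hc p (Finset.mem_union_left _ hp)
            have hc2 : ∀ p ∈ R2, θ (Finsupp.single p 1) = θ (G.Expand hrf p) :=
              fun p hp => hc p (Finset.mem_union_right _ hp)
            exact (hθ1 θ hc1).trans (hθ2 θ hc2)
      add' := by
        rintro a b a' b' ⟨h1, h2⟩ ⟨h3, h4⟩
        refine ⟨(G.talCon hrf).add h1 h3, fun hP1 hP2 => ?_⟩
        obtain ⟨hPa, hPa'⟩ := pSupp_add.mp hP1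
        obtain ⟨hPb, hPb'⟩ := pSupp_add.mp hP2
        obtain ⟨R1, hR1, hθ1⟩ := h2 hPa hPb
        obtain ⟨R2, hR2, hθ2⟩ := h4 hPa' hPb'
        refine ⟨R1 ∪ R2, ?_, fun θ hc => ?_⟩
        · intro p hp
          rcases Finset.mem_union.mp hp with hp | hp
          · exact hR1 p hp
          · exact hR2 p hp
        · rw [map_add, map_add,
            hθ1 θ (fun p hp => hc p (Finset.mem_union_left _ hp)),
            hθ2 θ (fun p hp => hc p (Finset.mem_union_right _ hp))] }
  have hle : G.talCon hrf ≤ C := by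
    refine AddCon.addConGen_le.mpr ?_
    rintro a b ⟨v, i, hv, rfl, rfl⟩
    refine ⟨AddConGen.Rel.of _ _ ⟨v, i, hv, rfl, rfl⟩, fun hPa _ => ?_⟩
    refine ⟨{(v, i)}, ?_, fun θ hc => ?_⟩
    · intro p hp
      rw [Finset.mem_singleton] at hp
      subst hp
      exact ⟨pSupp_single.mp hPa, hv⟩
    · exact hc (v, i) (Finset.mem_singleton_self _)
  exact (hle h).2 ha hb

/-! ### The expansion homomorphism attached to a finite witness set -/

/-- Iterated expansion of a generator through the finite set `R`. -/
noncomputable def theta0 (G : DGraph V Ed) (hrf : G.RowFinite) (R : Finset (V × ℤ))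
    (p : V × ℤ) : (V × ℤ) →₀ ℕ :=
  haveI : DecidableEq (V × ℤ) := Classical.decEq _
  if h : p ∈ R then
    ∑ e ∈ (hrf p.1).toFinset, theta0 G hrf R (G.r e, p.2 + 1)
  else Finsupp.single p 1
termination_by (R.filter fun q => p.2 ≤ q.2).card
decreasing_by
  apply Finset.card_lt_card
  constructor
  · intro q hq
    rw [Finset.mem_filter] at hq ⊢
    exact ⟨hq.1, by omega⟩
  · intro hcon
    have h1 : p ∈ R.filter fun q => p.2 ≤ q.2 := Finset.mem_filter.mpr ⟨h, le_refl _⟩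
    have h2 := hcon h1
    rw [Finset.mem_filter] at h2
    omega

theorem theta0_of_mem {R : Finset (V × ℤ)} {p : V × ℤ} (h : p ∈ R) :
    theta0 G hrf R p = ∑ e ∈ (hrf p.1).toFinset, theta0 G hrf R (G.r e, p.2 + 1) := by
  rw [theta0, dif_pos h]

theorem theta0_of_not_mem {R : Finset (V × ℤ)} {p : V × ℤ} (h : p ∉ R) :
    theta0 G hrf R p = Finsupp.single p 1 := by
  rw [theta0, dif_neg h]

/-- The expansion homomorphism. -/
noncomputable def thetaHom (G : DGraph V Ed) (hrf : G.RowFinite) (R : Finset (V × ℤ)) :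
    ((V × ℤ) →₀ ℕ) →+ ((V × ℤ) →₀ ℕ) :=
  Finsupp.liftAddHom fun p => multiplesHom _ (theta0 G hrf R p)

theorem thetaHom_single {R : Finset (V × ℤ)} (p : V × ℤ) :
    thetaHom G hrf R (Finsupp.single p 1) = theta0 G hrf R p := by
  rw [thetaHom, Finsupp.liftAddHom_apply_single]
  exact one_nsmul _

theorem thetaHom_compat {R : Finset (V × ℤ)} :
    ∀ p ∈ R, thetaHom G hrf R (Finsupp.single p 1) = thetaHom G hrf R (G.Expand hrf p) := by
  intro p hp
  rw [thetaHom_single, theta0_of_mem hp, Expand, map_sum]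
  exact Finset.sum_congr rfl fun e _ => (thetaHom_single _).symm

/-- Total mass of an element of the free commutative monoid. -/
noncomputable def massHom (V : Type) : ((V × ℤ) →₀ ℕ) →+ ℕ :=
  Finsupp.liftAddHom fun _ => AddMonoidHom.id ℕ

theorem massHom_single (p : V × ℤ) (n : ℕ) : massHom V (Finsupp.single p n) = n := by
  rw [massHom, Finsupp.liftAddHom_apply_single]; rfl

theorem massHom_eq_zero_iff {a : (V × ℤ) →₀ ℕ} : massHom V a = 0 ↔ a = 0 := by
  constructor
  · intro h
    rw [massHom, Finsupp.liftAddHom_apply] at h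
    rw [Finsupp.sum] at h
    rw [Finsupp.nat_eq_zero_iff]
    intro p
    by_contra hp
    have hmem : p ∈ a.support := Finsupp.mem_support_iff.mpr hp
    have : a p ≤ 0 := h ▸ Finset.single_le_sum (f := fun q => (AddMonoidHom.id ℕ) (a q))
      (fun _ _ => Nat.zero_le _) hmem
    omega
  · intro h; rw [h, map_zero]

theorem one_le_massHom_theta0 {R : Finset (V × ℤ)} (hR : ∀ p ∈ R, ¬ G.IsSink p.1)
    (p : V × ℤ) : 1 ≤ massHom V (theta0 G hrf R p) := by
  by_cases h : p ∈ R
  · rw [theta0_of_mem h, map_sum]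
    obtain ⟨e, he⟩ := (not_isSink_iff G p.1).mp (hR p h)
    have hmem : e ∈ (hrf p.1).toFinset := (mem_toFinset_iff G hrf _ e).mpr he
    calc (1 : ℕ) ≤ massHom V (theta0 G hrf R (G.r e, p.2 + 1)) :=
          one_le_massHom_theta0 hR _
      _ ≤ _ := Finset.single_le_sum
          (f := fun e => massHom V (theta0 G hrf R (G.r e, p.2 + 1)))
          (fun _ _ => Nat.zero_le _) hmem
  · rw [theta0_of_not_mem h, massHom_single]
termination_by (R.filter fun q => p.2 ≤ q.2).card
decreasing_by
  apply Finset.card_lt_card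
  constructor
  · intro q hq
    rw [Finset.mem_filter] at hq ⊢
    exact ⟨hq.1, by omega⟩
  · intro hcon
    have h1 : p ∈ R.filter fun q => p.2 ≤ q.2 := Finset.mem_filter.mpr ⟨h, le_refl _⟩
    have h2 := hcon h1
    rw [Finset.mem_filter] at h2
    omega

theorem massHom_thetaHom_eq {R : Finset (V × ℤ)} (a : (V × ℤ) →₀ ℕ) :
    massHom V (thetaHom G hrf R a) = a.sum fun p n => n * massHom V (theta0 G hrf R p) := by
  rw [thetaHom, Finsupp.liftAddHom_apply, map_finsuppSum]
  refine Finsupp.sum_congr fun p hp => ?_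
  rw [multiplesHom_apply, map_nsmul, smul_eq_mul]

theorem one_le_massHom_thetaHom {R : Finset (V × ℤ)} (hR : ∀ p ∈ R, ¬ G.IsSink p.1)
    {a : (V × ℤ) →₀ ℕ} (ha : a ≠ 0) : 1 ≤ massHom V (thetaHom G hrf R a) := by
  rw [massHom_thetaHom_eq]
  obtain ⟨p, hp⟩ := Finsupp.support_nonempty_iff.mpr ha
  have hap : a p ≠ 0 := Finsupp.mem_support_iff.mp hp
  rw [Finsupp.sum]
  calc (1 : ℕ) ≤ a p * massHom V (theta0 G hrf R p) :=
        Nat.one_le_iff_ne_zero.mpr (Nat.mul_ne_zero hap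
          (by have := one_le_massHom_theta0 (hrf := hrf) hR p; omega))
    _ ≤ _ := Finset.single_le_sum
          (f := fun p => a p * massHom V (theta0 G hrf R p))
          (fun _ _ => Nat.zero_le _) hp

/-- Zero-cancellation in the talented monoid. -/
theorem tal_cancel_zero {x z : G.Tal hrf} (h : x + z = x) : z = 0 := by
  obtain ⟨a, rfl⟩ := mkT_surjective G hrf x
  obtain ⟨c, rfl⟩ := mkT_surjective G hrf z
  rw [← map_add] at h
  have htc : (G.talCon hrf) (a + c) a := (mkT_eq_iff G hrf _ _).mp h
  obtain ⟨R, hR, hθ⟩ := fw_of_talCon satHer_univ htc (fun _ _ => trivial) (fun _ _ => trivial)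
  have hkey := hθ (thetaHom G hrf R) (thetaHom_compat)
  rw [map_add] at hkey
  have hz : thetaHom G hrf R c = 0 := by
    ext q
    have := congrArg (fun d => d q) hkey
    simp only [Finsupp.add_apply] at this
    simp only [Finsupp.coe_zero, Pi.zero_apply]
    omega
  by_contra hc
  have hc0 : c ≠ 0 := fun h0 => hc (by rw [h0, map_zero])
  have := one_le_massHom_thetaHom (hrf := hrf) (fun p hp => (hR p hp).2) hc0
  rw [hz, map_zero] at this
  omega

end DGraph

namespace DGraph

variable {V Ed : Type} {G : DGraph V Ed} {hrf : G.RowFinite}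

/-! ### Part (a) -/

/-- Everything in the saturated hereditary closure of a vertex of an extreme
cycle flows back to the cycle. -/
theorem scs_flows_to_cycle {c : G.GPath} (hc : c.IsExtremeCycle) {v : V}
    (hv : v ∈ c.vset) : ∀ u, SCS G {v} u → ∃ w ∈ c.vset, G.FlowsTo u w := by
  intro u hu
  refine scs_reach (Q := fun w' => ∃ w ∈ c.vset, G.FlowsTo w' w) ?_ ?_ u hu u
    Relation.ReflTransGen.refl
  · rintro v' rfl w' hw'
    obtain ⟨l, hl⟩ := flowsTo_iff_pathTo.mp hw'
    rcases eq_or_ne l [] with rfl | hne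
    · cases hl
      exact ⟨v', hv, Relation.ReflTransGen.refl⟩
    · have hsrc := hl.toGPath_src hne
      have htgt := hl.toGPath_tgt hne
      obtain ⟨w, hwc, hwf⟩ := hc.2.2 (hl.toGPath hne) (by rw [hsrc]; exact hv)
      rw [htgt] at hwf
      exact ⟨w, hwc, hwf⟩
  · rintro w hns hall
    obtain ⟨e, he⟩ := (not_isSink_iff G w).mp hns
    obtain ⟨w0, hw0, hf⟩ := hall e he
    exact ⟨w0, hw0, (Relation.ReflTransGen.single ⟨e, he, rfl⟩).trans hf⟩

theorem gen_shift_mem {J : Set (G.Tal hrf)} (hJ : G.IsZOrderIdeal hrf J) {w : V} {i : ℤ}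
    (h : G.gen hrf w i ∈ J) (j : ℤ) : G.gen hrf w j ∈ J := by
  have := hJ.2 (j - i) _ h
  rwa [shift_gen, show i + (j - i) = j by ring] at this

theorem gen_mem_self {v : V} : G.gen hrf v 0 ∈ G.zIdealGen hrf {G.gen hrf v 0} :=
  subset_zIdealGen rfl

theorem zIdealGen_gen_ne_zero (v : V) : G.zIdealGen hrf {G.gen hrf v 0} ≠ {0} := by
  intro h
  have := gen_mem_self (hrf := hrf) (v := v)
  rw [h, Set.mem_singleton_iff] at this
  exact gen_ne_zero hrf v 0 this

theorem simple_of_extreme {c : G.GPath} (hc : c.IsExtremeCycle) {v : V}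
    (hv : v ∈ c.vset) : G.IsSimpleZIdeal hrf (G.zIdealGen hrf {G.gen hrf v 0}) := by
  refine ⟨isZOrderIdeal_zIdealGen _, zIdealGen_gen_ne_zero v, ?_⟩
  intro J hJ hsub
  by_cases hJ0 : J = {0}
  · exact Or.inl hJ0
  right
  have hex : ∃ y ∈ J, y ≠ 0 := by
    by_contra hcon
    push_neg at hcon
    apply hJ0
    apply Set.Subset.antisymm
    · intro y hy; exact hcon y hy
    · intro y hy; rw [Set.mem_singleton_iff] at hy; rw [hy]; exact hJ.1.zero_mem
  obtain ⟨x0, hx0J, hx0⟩ := hex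
  obtain ⟨a0, rfl⟩ := mkT_surjective G hrf x0
  have ha0 : a0 ≠ 0 := fun h => hx0 (by rw [h, map_zero])
  obtain ⟨p0, hp0⟩ := Finsupp.support_nonempty_iff.mpr ha0
  have hgen_mem : G.gen hrf p0.1 p0.2 ∈ J :=
    hJ.1.mem_of_le hx0J (mkT_single_mle (Finsupp.mem_support_iff.mp hp0))
  have hscs : SCS G {v} p0.1 :=
    gen_mem_zIdealGen_iff.mp (hsub hgen_mem)
  obtain ⟨w0, hw0c, hw0f⟩ := scs_flows_to_cycle hc hv p0.1 hscs
  obtain ⟨l1, hl1⟩ := flowsTo_iff_pathTo.mp hw0f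
  have h1 : G.gen hrf w0 (p0.2 + l1.length) ∈ J :=
    hJ.1.mem_of_le hgen_mem (pathTo_mle hl1 p0.2)
  obtain ⟨l2, hl2⟩ := flowsTo_iff_pathTo.mp (cycle_flows hc.1 hw0c hv)
  have h2 : G.gen hrf v (p0.2 + l1.length + l2.length) ∈ J :=
    hJ.1.mem_of_le h1 (pathTo_mle hl2 _)
  have h3 : G.gen hrf v 0 ∈ J := gen_shift_mem hJ h2 0
  apply Set.Subset.antisymm hsub
  exact zIdealGen_subset hJ (by rintro y rfl; exact h3)

theorem periodic_of_extreme {c : G.GPath} (hc : c.IsExtremeCycle) {v : V}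
    (hv : v ∈ c.vset) :
    ∃ k : ℕ, 0 < k ∧ MLe (G.shift hrf (k : ℤ) (G.gen hrf v 0)) (G.gen hrf v 0) ∧
      G.shift hrf (k : ℤ) (G.gen hrf v 0) ≠ G.gen hrf v 0 := by
  classical
  obtain ⟨f, e, he, hsf, hfe⟩ := hc.2.1
  set u := G.s e with hu
  have huc : u ∈ c.vset := ⟨e, he, rfl⟩
  -- path from v to u
  obtain ⟨l1, hl1⟩ := flowsTo_iff_pathTo.mp (cycle_flows hc.1 hv huc)
  set i1 : ℤ := (l1.length : ℤ) with hi1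
  have hle1 : MLe (G.gen hrf u i1) (G.gen hrf v 0) := by
    have := pathTo_mle (hrf := hrf) hl1 0
    rwa [zero_add] at this
  obtain ⟨z1, hz1⟩ := hle1
  -- expansion at u with the exit edge
  have hns : ¬ G.IsSink u := (not_isSink_iff G u).mpr ⟨e, rfl⟩
  have hef : e ∈ (hrf u).toFinset := (mem_toFinset_iff G hrf u e).mpr rfl
  have hff : f ∈ ((hrf u).toFinset).erase e := by
    rw [Finset.mem_erase]
    exact ⟨hfe, (mem_toFinset_iff G hrf u f).mpr hsf⟩
  set W : G.Tal hrf := ∑ g ∈ ((hrf u).toFinset).erase e, G.gen hrf (G.r g) (i1 + 1) with hW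
  have h2 : G.gen hrf u i1 = G.gen hrf (G.r e) (i1 + 1) + W := by
    rw [gen_expand G hrf hns i1, ← Finset.sum_erase_add _ _ hef, add_comm]
  have hWne : W ≠ 0 := by
    intro h0
    have : G.gen hrf (G.r f) (i1 + 1) +
        ∑ g ∈ (((hrf u).toFinset).erase e).erase f, G.gen hrf (G.r g) (i1 + 1) = 0 := by
      rw [add_comm, Finset.sum_erase_add _ _ hff, ← hW, h0]
    exact gen_ne_zero hrf (G.r f) (i1 + 1) (tal_conical hrf this)
  -- path from r e back to v
  have hre_tgt : G.FlowsTo (G.r e) v := by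
    have h4 := (gpath_pathTo c).mem_flows he
    obtain ⟨ev, hev, hsev⟩ := hv
    have h5 := (gpath_pathTo c).mem_flows hev
    refine h4.2.trans ?_
    rw [← hc.1.1]
    exact hsev ▸ h5.1
  obtain ⟨l3, hl3⟩ := flowsTo_iff_pathTo.mp hre_tgt
  obtain ⟨z3, hz3⟩ := pathTo_mle (hrf := hrf) hl3 (i1 + 1)
  set k : ℕ := l1.length + 1 + l3.length with hk
  have hkpos : 0 < k := by omega
  have hM : i1 + 1 + (l3.length : ℤ) = (k : ℤ) := by rw [hk, hi1]; push_cast; ring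
  have hmain : G.gen hrf v (k : ℤ) + (z3 + W + z1) = G.gen hrf v 0 := by
    rw [← hz1, h2, ← hz3, hM]
    abel
  refine ⟨k, hkpos, ?_, ?_⟩
  · rw [shift_gen, zero_add]
    exact ⟨z3 + W + z1, hmain⟩
  · rw [shift_gen, zero_add]
    intro heq
    rw [heq] at hmain
    have hZ := tal_cancel_zero hmain
    have : W + (z3 + z1) = 0 := by rw [← hZ]; abel
    exact hWne (tal_conical hrf this)

end DGraph

namespace DGraph

variable {V Ed : Type} {G : DGraph V Ed} {hrf : G.RowFinite}

/-! ### Part (b) -/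

theorem zIdealGen_gen_subset_of_flowsTo {v u : V} (h : G.FlowsTo v u) :
    G.zIdealGen hrf {G.gen hrf u 0} ⊆ G.zIdealGen hrf {G.gen hrf v 0} := by
  apply zIdealGen_subset (isZOrderIdeal_zIdealGen _)
  rintro y rfl
  exact gen_mem_zIdealGen_iff.mpr ((SCS.base (Set.mem_singleton v)).flowsTo h)

theorem zIdealGen_gen_eq_of_cycle {c : G.GPath} (hc : c.IsCycle) {v u : V}
    (hv : v ∈ c.vset) (hu : u ∈ c.vset) :
    G.zIdealGen hrf {G.gen hrf v 0} = G.zIdealGen hrf {G.gen hrf u 0} :=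
  Set.Subset.antisymm
    (zIdealGen_gen_subset_of_flowsTo (cycle_flows hc hu hv))
    (zIdealGen_gen_subset_of_flowsTo (cycle_flows hc hv hu))

theorem part_b {c d : G.GPath} (hc : c.IsExtremeCycle) (hd : d.IsExtremeCycle)
    {v w : V} (hv : v ∈ c.vset) (hw : w ∈ d.vset) :
    G.zIdealGen hrf {G.gen hrf v 0} = G.zIdealGen hrf {G.gen hrf w 0} ↔
      ∃ u ∈ c.vset, ∃ u' ∈ d.vset, G.FlowsTo u u' ∨ G.FlowsTo u' u := by
  constructor
  · intro h
    have hmem : G.gen hrf w 0 ∈ G.zIdealGen hrf {G.gen hrf v 0} := by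
      rw [h]; exact gen_mem_self
    obtain ⟨u, huc, huf⟩ := scs_flows_to_cycle hc hv w (gen_mem_zIdealGen_iff.mp hmem)
    exact ⟨u, huc, w, hw, Or.inr huf⟩
  · rintro ⟨u, huc, u', hu'd, h | h⟩
    · have hsub : G.zIdealGen hrf {G.gen hrf u' 0} ⊆ G.zIdealGen hrf {G.gen hrf u 0} :=
        zIdealGen_gen_subset_of_flowsTo h
      have hsimp := simple_of_extreme (hrf := hrf) hc huc
      rcases hsimp.2.2 _ (isZOrderIdeal_zIdealGen _) hsub with h0 | heq
      · exact absurd h0 (zIdealGen_gen_ne_zero u')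
      · rw [zIdealGen_gen_eq_of_cycle hc.1 hv huc, ← heq,
          ← zIdealGen_gen_eq_of_cycle hd.1 hw hu'd]
    · have hsub : G.zIdealGen hrf {G.gen hrf u 0} ⊆ G.zIdealGen hrf {G.gen hrf u' 0} :=
        zIdealGen_gen_subset_of_flowsTo h
      have hsimp := simple_of_extreme (hrf := hrf) hd hu'd
      rcases hsimp.2.2 _ (isZOrderIdeal_zIdealGen _) hsub with h0 | heq
      · exact absurd h0 (zIdealGen_gen_ne_zero u)
      · rw [zIdealGen_gen_eq_of_cycle hc.1 hv huc, heq,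
          ← zIdealGen_gen_eq_of_cycle hd.1 hw hu'd]

end DGraph

namespace DGraph

variable {V Ed : Type} {G : DGraph V Ed} {hrf : G.RowFinite}

/-! ### Part (c): existence of a branching closed walk -/

/-- A vertex emitting two distinct edges. -/
def Branching (G : DGraph V Ed) (w : V) : Prop :=
  ∃ f g : Ed, G.s f = w ∧ G.s g = w ∧ f ≠ g

/-- The branching vertices of `R'` reachable from `v`. -/
def brSet (G : DGraph V Ed) (R' : Finset V) (v : V) : Set V :=
  {q | q ∈ R' ∧ Branching G q ∧ G.FlowsTo v q}

theorem brSet_finite (G : DGraph V Ed) (R' : Finset V) (v : V) : (brSet G R' v).Finite :=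
  R'.finite_toSet.subset fun q hq => hq.1

/-- Number of branching vertices of `R'` reachable from `v`. -/
noncomputable def brCount (G : DGraph V Ed) (R' : Finset V) (v : V) : ℕ :=
  (brSet G R' v).ncard

theorem massHom_apply (a : (V × ℤ) →₀ ℕ) : massHom V a = a.sum fun _ n => n := by
  rw [massHom, Finsupp.liftAddHom_apply]; rfl

theorem massHom_mapDomain (f : V × ℤ → V × ℤ) (a : (V × ℤ) →₀ ℕ) :
    massHom V (Finsupp.mapDomain f a) = massHom V a := by
  rw [Finsupp.mapDomain, map_finsuppSum, massHom_apply]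
  refine Finsupp.sum_congr fun p hp => ?_
  rw [massHom_single]

theorem brCount_le (G : DGraph V Ed) (R' : Finset V) (v : V) :
    brCount G R' v ≤ R'.card := by
  rw [brCount, ← Set.ncard_coe_finset R']
  exact Set.ncard_le_ncard (fun q hq => hq.1) R'.finite_toSet

theorem brCount_step (G : DGraph V Ed) (R' : Finset V) {e : Ed} {v : V}
    (hse : G.s e = v) : brCount G R' (G.r e) ≤ brCount G R' v := by
  refine Set.ncard_le_ncard ?_ (brSet_finite G R' v)
  rintro q ⟨h1, h2, h3⟩
  exact ⟨h1, h2, (Relation.ReflTransGen.single ⟨e, hse, rfl⟩).trans h3⟩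

theorem mass_theta0_le_pow {S : Set V} {R : Finset (V × ℤ)} {R' : Finset V} {B : ℕ}
    (hR : ∀ p ∈ R, p.1 ∈ S ∧ ¬ G.IsSink p.1)
    (hR' : ∀ p ∈ R, p.1 ∈ R')
    (hno : ∀ w ∈ S, Branching G w → ∀ l, l ≠ [] → ¬ PathTo G w w l)
    (hB1 : 1 ≤ B)
    (hB : ∀ w ∈ R', (hrf w).toFinset.card ≤ B)
    (p : V × ℤ) :
    massHom V (theta0 G hrf R p) ≤ B ^ brCount G R' p.1 := by
  by_cases hp : p ∈ R
  · obtain ⟨hpS, hpns⟩ := hR p hp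
    rw [theta0_of_mem hp, map_sum]
    by_cases hbr : Branching G p.1
    · have hw' : p.1 ∈ R' := hR' p hp
      have hwB : p.1 ∈ brSet G R' p.1 := ⟨hw', hbr, Relation.ReflTransGen.refl⟩
      have hpos : 1 ≤ brCount G R' p.1 := by
        have := (Set.ncard_pos (brSet_finite G R' p.1)).mpr ⟨p.1, hwB⟩
        rw [brCount]
        omega
      have hchild : ∀ e ∈ (hrf p.1).toFinset,
          brCount G R' (G.r e) ≤ brCount G R' p.1 - 1 := by
        intro e he
        have hse : G.s e = p.1 := (mem_toFinset_iff G hrf _ e).mp he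
        have hsub : brSet G R' (G.r e) ⊆ brSet G R' p.1 \ {p.1} := by
          rintro q ⟨hqR', hqbr, hqfl⟩
          refine ⟨⟨hqR', hqbr,
            (Relation.ReflTransGen.single ⟨e, hse, rfl⟩).trans hqfl⟩, ?_⟩
          intro hq0
          rw [Set.mem_singleton_iff] at hq0
          subst hq0
          obtain ⟨l, hl⟩ := flowsTo_iff_pathTo.mp hqfl
          exact hno _ hpS hbr (e :: l) (by simp) (PathTo.cons _ hse hl)
        calc brCount G R' (G.r e)
            ≤ (brSet G R' p.1 \ {p.1}).ncard :=
              Set.ncard_le_ncard hsub ((brSet_finite G R' p.1).diff)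
          _ = brCount G R' p.1 - 1 :=
              Set.ncard_diff_singleton_of_mem hwB
      calc ∑ e ∈ (hrf p.1).toFinset, massHom V (theta0 G hrf R (G.r e, p.2 + 1))
          ≤ ∑ _e ∈ (hrf p.1).toFinset, B ^ (brCount G R' p.1 - 1) := by
            refine Finset.sum_le_sum fun e he => ?_
            refine le_trans (mass_theta0_le_pow hR hR' hno hB1 hB (G.r e, p.2 + 1)) ?_
            exact Nat.pow_le_pow_right (by omega) (hchild e he)
        _ = (hrf p.1).toFinset.card * B ^ (brCount G R' p.1 - 1) := by
            rw [Finset.sum_const, smul_eq_mul]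
        _ ≤ B * B ^ (brCount G R' p.1 - 1) :=
            Nat.mul_le_mul_right _ (hB p.1 hw')
        _ = B ^ (brCount G R' p.1 - 1) * B := mul_comm _ _
        _ = B ^ brCount G R' p.1 := by rw [← pow_succ, Nat.sub_add_cancel hpos]
    · obtain ⟨e0, he0⟩ := (not_isSink_iff G p.1).mp hpns
      have hsingle : (hrf p.1).toFinset = {e0} := by
        apply Finset.eq_singleton_iff_unique_mem.mpr
        refine ⟨(mem_toFinset_iff G hrf _ e0).mpr he0, fun e' he' => ?_⟩
        by_contra hne
        exact hbr ⟨e', e0, (mem_toFinset_iff G hrf _ e').mp he', he0, hne⟩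
      rw [hsingle, Finset.sum_singleton]
      refine le_trans (mass_theta0_le_pow hR hR' hno hB1 hB (G.r e0, p.2 + 1)) ?_
      exact Nat.pow_le_pow_right (by omega) (brCount_step G R' he0)
  · rw [theta0_of_not_mem hp, massHom_single]
    exact Nat.one_le_pow _ _ (by omega)
termination_by (R.filter fun q => p.2 ≤ q.2).card
decreasing_by
  all_goals {
    apply Finset.card_lt_card
    constructor
    · intro q hq
      rw [Finset.mem_filter] at hq ⊢
      exact ⟨hq.1, by omega⟩
    · intro hcon
      have h1 : p ∈ R.filter fun q => p.2 ≤ q.2 := Finset.mem_filter.mpr ⟨hp, le_refl _⟩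
      have h2 := hcon h1
      rw [Finset.mem_filter] at h2
      omega }

theorem mass_thetaHom_le_pow {S : Set V} {R : Finset (V × ℤ)} {R' : Finset V} {B : ℕ}
    (hR : ∀ p ∈ R, p.1 ∈ S ∧ ¬ G.IsSink p.1)
    (hR' : ∀ p ∈ R, p.1 ∈ R')
    (hno : ∀ w ∈ S, Branching G w → ∀ l, l ≠ [] → ¬ PathTo G w w l)
    (hB1 : 1 ≤ B)
    (hB : ∀ w ∈ R', (hrf w).toFinset.card ≤ B)
    (a : (V × ℤ) →₀ ℕ) :
    massHom V (thetaHom G hrf R a) ≤ massHom V a * B ^ R'.card := by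
  rw [massHom_thetaHom_eq, massHom_apply, Finsupp.sum, Finsupp.sum, Finset.sum_mul]
  refine Finset.sum_le_sum fun p hp => ?_
  refine Nat.mul_le_mul_left _ ?_
  refine le_trans (mass_theta0_le_pow hR hR' hno hB1 hB p) ?_
  exact Nat.pow_le_pow_right (by omega) (brCount_le G R' p.1)

end DGraph

namespace DGraph

variable {V Ed : Type} {G : DGraph V Ed} {hrf : G.RowFinite}

theorem fw_shift {R : Finset (V × ℤ)} {a b : (V × ℤ) →₀ ℕ} (n : ℤ)
    (h : ∀ θ : ((V × ℤ) →₀ ℕ) →+ ((V × ℤ) →₀ ℕ),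
      (∀ p ∈ R, θ (Finsupp.single p 1) = θ (G.Expand hrf p)) → θ a = θ b)
    (θ : ((V × ℤ) →₀ ℕ) →+ ((V × ℤ) →₀ ℕ))
    (hθ : ∀ p ∈ R,
      θ (Finsupp.single ((p.1, p.2 + n) : V × ℤ) 1) = θ (G.Expand hrf (p.1, p.2 + n))) :
    θ (Finsupp.mapDomain (fun p : V × ℤ => (p.1, p.2 + n)) a) =
      θ (Finsupp.mapDomain (fun p : V × ℤ => (p.1, p.2 + n)) b) := by
  classical
  have key : ∀ p ∈ R,
      (θ.comp (Finsupp.mapDomain.addMonoidHom fun p : V × ℤ => (p.1, p.2 + n)))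
        (Finsupp.single p 1) =
      (θ.comp (Finsupp.mapDomain.addMonoidHom fun p : V × ℤ => (p.1, p.2 + n)))
        (G.Expand hrf p) := by
    intro p hp
    have h1 : (Finsupp.mapDomain.addMonoidHom fun p : V × ℤ => (p.1, p.2 + n))
        (Finsupp.single p 1) = Finsupp.single ((p.1, p.2 + n) : V × ℤ) 1 := by
      show Finsupp.mapDomain _ (Finsupp.single p 1) = _
      rw [Finsupp.mapDomain_single]
    have h2 : (Finsupp.mapDomain.addMonoidHom fun p : V × ℤ => (p.1, p.2 + n))
        (G.Expand hrf p) = G.Expand hrf ((p.1, p.2 + n) : V × ℤ) := by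
      rw [Expand, map_sum, Expand]
      refine Finset.sum_congr rfl fun e he => ?_
      show Finsupp.mapDomain _ (Finsupp.single _ 1) = _
      rw [Finsupp.mapDomain_single]
      congr 2
      show p.2 + 1 + n = p.2 + n + 1
      ring
    simp only [AddMonoidHom.comp_apply]
    rw [show ((Finsupp.mapDomain.addMonoidHom fun p : V × ℤ => (p.1, p.2 + n))
        (Finsupp.single p 1)) = Finsupp.single ((p.1, p.2 + n) : V × ℤ) 1 from h1,
      show ((Finsupp.mapDomain.addMonoidHom fun p : V × ℤ => (p.1, p.2 + n))
        (G.Expand hrf p)) = G.Expand hrf ((p.1, p.2 + n) : V × ℤ) from h2]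
    exact hθ p hp
  exact h _ key

theorem exists_branching_closed_walk
    {S : Set V} (hS : G.SatHer S) {a c : (V × ℤ) →₀ ℕ}
    (hPa : PSupp S a) (hc : c ≠ 0) (k : ℕ)
    (heq : (G.talCon hrf)
      (Finsupp.mapDomain (fun p : V × ℤ => (p.1, p.2 + (k : ℤ))) a + c) a) :
    ∃ p ∈ S, Branching G p ∧ ∃ l, l ≠ ([] : List Ed) ∧ PathTo G p p l := by
  classical
  by_contra hcon
  push_neg at hcon
  have hno : ∀ w ∈ S, Branching G w → ∀ l, l ≠ ([] : List Ed) → ¬ PathTo G w w l := by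
    intro w hw hbr l hl
    exact hcon w hw hbr l hl
  have hPsh : PSupp S (Finsupp.mapDomain (fun p : V × ℤ => (p.1, p.2 + (k : ℤ))) a + c) :=
    (pSupp_iff_of_talCon hrf hS heq).mpr hPa
  obtain ⟨R, hR, hkey⟩ := fw_of_talCon hS heq hPsh hPa
  set R' : Finset V := R.image Prod.fst with hR'def
  set B : ℕ := R'.sup (fun w => (hrf w).toFinset.card) + 1 with hBdef
  have hB : ∀ w ∈ R', (hrf w).toFinset.card ≤ B := by
    intro w hw
    have h1 : (hrf w).toFinset.card ≤ R'.sup (fun w => (hrf w).toFinset.card) :=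
      Finset.le_sup (f := fun w => (hrf w).toFinset.card) hw
    omega
  set C : ℕ := massHom V a * B ^ R'.card with hCdef
  set m : ℕ := C + 1 with hmdef
  set Rm : Finset (V × ℤ) :=
    (Finset.range m).biUnion
      (fun j => R.image (fun p : V × ℤ => (p.1, p.2 + (j * k : ℕ)))) with hRmdef
  have hRm : ∀ p ∈ Rm, p.1 ∈ S ∧ ¬ G.IsSink p.1 := by
    intro p hp
    obtain ⟨j, _, hp2⟩ := Finset.mem_biUnion.mp hp
    obtain ⟨q, hq, rfl⟩ := Finset.mem_image.mp hp2
    exact hR q hq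
  have hRm' : ∀ p ∈ Rm, p.1 ∈ R' := by
    intro p hp
    obtain ⟨j, _, hp2⟩ := Finset.mem_biUnion.mp hp
    obtain ⟨q, hq, rfl⟩ := Finset.mem_image.mp hp2
    show q.1 ∈ R'
    rw [hR'def]
    exact Finset.mem_image_of_mem _ hq
  set θ := thetaHom G hrf Rm with hθdef
  -- the iteration
  have hiter : ∀ j ≤ m, θ a =
      θ (Finsupp.mapDomain (fun p : V × ℤ => (p.1, p.2 + (j * k : ℕ))) a) +
        ∑ i ∈ Finset.range j,
          θ (Finsupp.mapDomain (fun p : V × ℤ => (p.1, p.2 + (i * k : ℕ))) c) := by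
    intro j
    induction j with
    | zero =>
      intro _
      have hid : (Finsupp.mapDomain (fun p : V × ℤ => (p.1, p.2 + (0 * k : ℕ))) a) = a := by
        have : (fun p : V × ℤ => (p.1, p.2 + (0 * k : ℕ))) = id := by
          funext p
          simp
        rw [this, Finsupp.mapDomain_id]
      rw [hid]
      simp
    | succ j ih =>
      intro hj
      have hstep : θ (Finsupp.mapDomain (fun p : V × ℤ => (p.1, p.2 + (j * k : ℕ))) a) =
          θ (Finsupp.mapDomain (fun p : V × ℤ => (p.1, p.2 + ((j + 1) * k : ℕ))) a) +
            θ (Finsupp.mapDomain (fun p : V × ℤ => (p.1, p.2 + (j * k : ℕ))) c) := by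
        have hcompat : ∀ p ∈ R, θ (Finsupp.single ((p.1, p.2 + ((j * k : ℕ) : ℤ)) : V × ℤ) 1)
            = θ (G.Expand hrf (p.1, p.2 + ((j * k : ℕ) : ℤ))) := by
          intro p hp
          refine thetaHom_compat _ ?_
          refine Finset.mem_biUnion.mpr ⟨j, Finset.mem_range.mpr (by omega), ?_⟩
          exact Finset.mem_image_of_mem _ hp
        have := fw_shift ((j * k : ℕ) : ℤ) hkey θ hcompat
        rw [Finsupp.mapDomain_add, map_add] at this
        have hcomp : Finsupp.mapDomain (fun p : V × ℤ => (p.1, p.2 + ((j * k : ℕ) : ℤ)))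
            (Finsupp.mapDomain (fun p : V × ℤ => (p.1, p.2 + (k : ℤ))) a) =
            Finsupp.mapDomain (fun p : V × ℤ => (p.1, p.2 + ((j + 1) * k : ℕ))) a := by
          rw [← Finsupp.mapDomain_comp]
          congr 1
          funext p
          show (p.1, p.2 + (k : ℤ) + ((j * k : ℕ) : ℤ)) = (p.1, p.2 + (((j + 1) * k : ℕ) : ℤ))
          congr 1
          push_cast
          ring
        rw [hcomp] at this
        exact this.symm
      rw [ih (by omega), hstep, Finset.sum_range_succ]
      abel
  have hfinal := hiter m (le_refl m)
  -- lower bound on the mass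
  have hlow : m ≤ massHom V (θ a) := by
    rw [hfinal, map_add, map_sum]
    have hterm : ∀ i ∈ Finset.range m, 1 ≤ massHom V
        (θ (Finsupp.mapDomain (fun p : V × ℤ => (p.1, p.2 + (i * k : ℕ))) c)) := by
      intro i _
      refine one_le_massHom_thetaHom (fun p hp => (hRm p hp).2) ?_
      intro h0
      apply hc
      have := massHom_mapDomain (fun p : V × ℤ => (p.1, p.2 + ((i * k : ℕ) : ℤ))) c
      rw [h0, map_zero] at this
      exact massHom_eq_zero_iff.mp this.symm
    calc m = ∑ _i ∈ Finset.range m, 1 := by simp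
      _ ≤ ∑ i ∈ Finset.range m, massHom V
          (θ (Finsupp.mapDomain (fun p : V × ℤ => (p.1, p.2 + (i * k : ℕ))) c)) :=
        Finset.sum_le_sum hterm
      _ ≤ _ := Nat.le_add_left _ _
  -- upper bound on the mass
  have hup : massHom V (θ a) ≤ C := by
    rw [hCdef]
    exact mass_thetaHom_le_pow hRm hRm' hno (by omega) hB a
  omega

end DGraph

theorem not_nodup_split {α : Type} {l : List α} (h : ¬ l.Nodup) :
    ∃ (x : α) (l1 l2 l3 : List α), l = l1 ++ x :: l2 ++ x :: l3 := by
  induction l with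
  | nil => simp at h
  | cons a t ih =>
    by_cases ha : a ∈ t
    · obtain ⟨l2, l3, rfl⟩ := List.append_of_mem ha
      exact ⟨a, [], l2, l3, rfl⟩
    · have hnt : ¬ t.Nodup := fun hn => h (List.nodup_cons.mpr ⟨ha, hn⟩)
      obtain ⟨x, l1, l2, l3, rfl⟩ := ih hnt
      exact ⟨x, a :: l1, l2, l3, rfl⟩

namespace DGraph

variable {V Ed : Type} {G : DGraph V Ed} {hrf : G.RowFinite}

theorem exists_cycle_with_exit {p : V} (hbr : Branching G p) {l0 : List Ed}
    (hne0 : l0 ≠ []) (hl0 : PathTo G p p l0) :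
    ∃ cy : G.GPath, cy.IsCycle ∧ cy.HasExit ∧ p ∈ cy.vset := by
  classical
  have hNne : (Set.Nonempty {n | ∃ l, PathTo G p p l ∧ l ≠ [] ∧ l.length = n}) :=
    ⟨l0.length, l0, hl0, hne0, rfl⟩
  obtain ⟨l, hl, hlne, hlen⟩ := Nat.sInf_mem hNne
  have hnodup : l.Nodup := by
    by_contra hnd
    obtain ⟨x, l1, l2, l3, hsplit⟩ := not_nodup_split hnd
    rw [hsplit] at hl
    obtain ⟨v1, hv1, hv2⟩ := hl.split
    obtain ⟨hsx, hrest⟩ := hv2.head_src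
    obtain ⟨v0, hu1, hu2⟩ := hv1.split
    obtain ⟨hsx0, _⟩ := hu2.head_src
    have hshort : PathTo G p p (l1 ++ x :: l3) :=
      hu1.append (PathTo.cons _ hsx0 hrest)
    have hmem : (l1 ++ x :: l3).length ∈
        {n | ∃ l, PathTo G p p l ∧ l ≠ [] ∧ l.length = n} :=
      ⟨_, hshort, by simp, rfl⟩
    have hle := Nat.sInf_le hmem
    rw [hsplit] at hlen
    simp only [List.length_append, List.length_cons] at hlen hle
    omega
  obtain ⟨e1, t1, rfl⟩ := List.exists_cons_of_ne_nil hlne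
  have hs1 : G.s e1 = p := (hl.head_src).1
  refine ⟨hl.toGPath hlne, ⟨?_, hnodup⟩, ?_, ?_⟩
  · rw [hl.toGPath_src hlne, hl.toGPath_tgt hlne]
  · obtain ⟨f, g, hf, hg, hfg⟩ := hbr
    by_cases hfe : f = e1
    · refine ⟨g, e1, List.mem_cons_self, ?_, ?_⟩
      · rw [hg, hs1]
      · exact fun h => hfg (hfe.trans h.symm)
    · exact ⟨f, e1, List.mem_cons_self, by rw [hf, hs1], hfe⟩
  · exact ⟨e1, List.mem_cons_self, hs1⟩

theorem flowsTo_of_scs_closed {p t : V} {l0 : List Ed} (hne0 : l0 ≠ [])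
    (hl0 : PathTo G p p l0) (h : SCS G {t} p) : G.FlowsTo t p := by
  have key := scs_reach (A := {t}) (Q := fun w' => G.FlowsTo w' p → G.FlowsTo t p)
    ?_ ?_ p h p Relation.ReflTransGen.refl
  · exact key Relation.ReflTransGen.refl
  · intro t' ht' w' hw' hw'p
    rw [Set.mem_singleton_iff] at ht'
    subst ht'
    exact hw'.trans hw'p
  · intro w hns hall hwp
    rcases Relation.ReflTransGen.cases_head hwp with heq | ⟨y, ⟨e, hse, hre⟩, hrest⟩
    · subst heq
      obtain ⟨e0, t0, rfl⟩ := List.exists_cons_of_ne_nil hne0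
      obtain ⟨hse0, hrest0⟩ := hl0.head_src
      exact hall e0 hse0 (pathTo_flowsTo hrest0)
    · exact hall e hse (hre ▸ hrest)

theorem part_c (x : G.Tal hrf) (k : ℕ)
    (hle : MLe (G.shift hrf (k : ℤ) x) x) (hne : G.shift hrf (k : ℤ) x ≠ x)
    (hsimp : G.IsSimpleZIdeal hrf (G.zIdealGen hrf {x})) :
    ∃ cy : G.GPath, cy.IsExtremeCycle ∧
      ∃ v ∈ cy.vset, G.zIdealGen hrf {x} = G.zIdealGen hrf {G.gen hrf v 0} := by
  classical
  obtain ⟨a, rfl⟩ := mkT_surjective G hrf x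
  set A : Set V := {q | ∃ i : ℤ, a (q, i) ≠ 0} with hA
  set S : Set V := {q | SCS G A q} with hSdef
  have hS : G.SatHer S := satHer_scs A
  have hPa : PSupp S a := by
    intro p hp
    exact SCS.base ⟨p.2, by rw [Prod.mk.eta]; exact hp⟩
  obtain ⟨z, hz⟩ := hle
  have hzne : z ≠ 0 := fun h0 => hne (by rw [h0, add_zero] at hz; exact hz)
  obtain ⟨c, rfl⟩ := mkT_surjective G hrf z
  have hcne : c ≠ 0 := fun h0 => hzne (by rw [h0, map_zero])
  have heq : (G.talCon hrf)
      (Finsupp.mapDomain (fun p : V × ℤ => (p.1, p.2 + (k : ℤ))) a + c) a := by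
    rw [← mkT_eq_iff, map_add, ← shift_mkT]
    exact hz
  have hxmem : G.mkT hrf a ∈ G.zIdealGen hrf {G.mkT hrf a} := subset_zIdealGen rfl
  have hIdeal := isZOrderIdeal_zIdealGen (G := G) (hrf := hrf) {G.mkT hrf a}
  have hgenS : ∀ w ∈ S, ∀ j : ℤ, G.gen hrf w j ∈ G.zIdealGen hrf {G.mkT hrf a} := by
    intro w hw j
    refine gen_mem_of_scs hIdeal ?_ hw j
    intro q hq i
    obtain ⟨i0, hi0⟩ := hq
    have h1 : G.gen hrf q i0 ∈ G.zIdealGen hrf {G.mkT hrf a} :=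
      hIdeal.1.mem_of_le hxmem (mkT_single_mle (p := (q, i0)) hi0)
    exact gen_shift_mem hIdeal h1 i
  obtain ⟨p, hpS, hpbr, l0, hl0ne, hl0⟩ :=
    exists_branching_closed_walk hS hPa hcne k heq
  obtain ⟨cy, hcy, hexit, hpv⟩ := exists_cycle_with_exit hpbr hl0ne hl0
  have hsubp : G.zIdealGen hrf {G.gen hrf p 0} ⊆ G.zIdealGen hrf {G.mkT hrf a} :=
    zIdealGen_subset hIdeal (by rintro y rfl; exact hgenS p hpS 0)
  have heqp : G.zIdealGen hrf {G.gen hrf p 0} = G.zIdealGen hrf {G.mkT hrf a} := by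
    rcases hsimp.2.2 _ (isZOrderIdeal_zIdealGen _) hsubp with h0 | h
    · exact absurd h0 (zIdealGen_gen_ne_zero p)
    · exact h
  have hext : ∀ lam : G.GPath, lam.src ∈ cy.vset → ∃ w ∈ cy.vset, G.FlowsTo lam.tgt w := by
    intro lam hsrc
    have hpt : G.FlowsTo p lam.tgt :=
      (cycle_flows hcy hpv hsrc).trans (pathTo_flowsTo (gpath_pathTo lam))
    have htS : lam.tgt ∈ S := (show SCS G A p from hpS).flowsTo hpt
    have hsubt : G.zIdealGen hrf {G.gen hrf lam.tgt 0} ⊆ G.zIdealGen hrf {G.mkT hrf a} :=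
      zIdealGen_subset hIdeal (by rintro y rfl; exact hgenS lam.tgt htS 0)
    have heqt : G.zIdealGen hrf {G.gen hrf lam.tgt 0} = G.zIdealGen hrf {G.mkT hrf a} := by
      rcases hsimp.2.2 _ (isZOrderIdeal_zIdealGen _) hsubt with h0 | h
      · exact absurd h0 (zIdealGen_gen_ne_zero lam.tgt)
      · exact h
    have hpmem : G.gen hrf p 0 ∈ G.zIdealGen hrf {G.gen hrf lam.tgt 0} := by
      rw [heqt, ← heqp]
      exact gen_mem_self
    have hscs : SCS G {lam.tgt} p := gen_mem_zIdealGen_iff.mp hpmem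
    exact ⟨p, hpv, flowsTo_of_scs_closed hl0ne hl0 hscs⟩
  exact ⟨cy, ⟨hcy, hexit, hext⟩, p, hpv, heqp.symm⟩

end DGraph

/-- Disjoint extreme cycles correspond to simple ℤ-order ideals `⟨x⟩`
with `ᵏx < x` for some `k > 0`:
(a) if `v` lies on an extreme cycle then `⟨v⟩` is a simple ℤ-order ideal and `ᵏv < v` for
some `k > 0`;
(b) two extreme cycles generate the same ideal iff they are not disjoint (some path
connects a vertex of one to a vertex of the other);
(c) every simple ℤ-order ideal of the form `⟨x⟩` with `ᵏx < x` for some `k > 0` equals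
`⟨v⟩` for some vertex `v` on an extreme cycle. -/
theorem statement8 {V Ed : Type} (G : DGraph V Ed) (hrf : G.RowFinite) :
    (∀ c : G.GPath, c.IsExtremeCycle → ∀ v ∈ c.vset,
      G.IsSimpleZIdeal hrf (G.zIdealGen hrf {G.gen hrf v 0}) ∧
        ∃ k : ℕ, 0 < k ∧ MLe (G.shift hrf (k : ℤ) (G.gen hrf v 0)) (G.gen hrf v 0) ∧
          G.shift hrf (k : ℤ) (G.gen hrf v 0) ≠ G.gen hrf v 0) ∧
    (∀ c d : G.GPath, c.IsExtremeCycle → d.IsExtremeCycle →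
      ∀ v ∈ c.vset, ∀ w ∈ d.vset,
        (G.zIdealGen hrf {G.gen hrf v 0} = G.zIdealGen hrf {G.gen hrf w 0} ↔
          ∃ u ∈ c.vset, ∃ u' ∈ d.vset, G.FlowsTo u u' ∨ G.FlowsTo u' u)) ∧
    ∀ (x : G.Tal hrf) (k : ℕ), 0 < k →
      MLe (G.shift hrf (k : ℤ) x) x → G.shift hrf (k : ℤ) x ≠ x →
      G.IsSimpleZIdeal hrf (G.zIdealGen hrf {x}) →
      ∃ c : G.GPath, c.IsExtremeCycle ∧
        ∃ v ∈ c.vset, G.zIdealGen hrf {x} = G.zIdealGen hrf {G.gen hrf v 0} := by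
  refine ⟨?_, ?_, ?_⟩
  · intro c hc v hv
    exact ⟨DGraph.simple_of_extreme hc hv, DGraph.periodic_of_extreme hc hv⟩
  · intro c d hc hd v hv w hw
    exact DGraph.part_b hc hd hv hw
  · intro x k _hk h1 h2 h3
    exact DGraph.part_c x k h1 h2 h3
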